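/- Let B, R > 0, ℓ > 2R, h > 0, and let m, m' be arbitrary real numbers. Set x₂* = −i·√(ℓ²/4 − R²) and K_ℓ = (ℓ + √(ℓ² − 4R²))/(2R). Then the h-dependent phase satisfies the exact identity s_h(0, x₂*) = (Bℓ/4)·√(ℓ² − 4R²) − h·(m + m')·ln(K_ℓ). -/

import Mathlib

/-- The `h`-dependent phase function `s_h` of the paper, with parameters `B`, `R`, `ℓ`, `h`
and angular momenta `m`, `m'`, using the principal branch `Complex.log`. -/
noncomputable def sh (B R ℓ h m m' : ℝ) (x₁ x₂ : ℂ) : ℂ :=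
  ((B : ℂ) / 4) * (x₁ + (ℓ : ℂ) / 2) ^ 2 + ((B : ℂ) / 4) * (x₁ - (ℓ : ℂ) / 2) ^ 2
    + ((B : ℂ) / 2) * x₂ ^ 2 - (B : ℂ) * (R : ℂ) ^ 2 / 2
    + Complex.I * ((B : ℂ) * (ℓ : ℂ) / 2) * x₂
    - (h : ℂ) * (m : ℂ) * Complex.log (((ℓ : ℂ) / 2 + x₁ + Complex.I * x₂) / (R : ℂ))
    - (h : ℂ) * (m' : ℂ) * Complex.log (((ℓ : ℂ) / 2 - x₁ + Complex.I * x₂) / (R : ℂ))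

/-!
At `x₁ = 0`, `x₂ = -i a` with `a = √(ℓ²/4 - R²)` both logarithms have the same real positive
argument `(ℓ/2 + a)/R = K_ℓ`, so they combine into `-h(m + m') ln K_ℓ`. In the quadratic part
`x₂² = -a²`, and the relation `a² = ℓ²/4 - R²` reduces it to `Bℓa/2 = (Bℓ/4)√(ℓ² - 4R²)`.
-/

open Complex

theorem Real.sqrt_sq_sub_four_mul_sq (ℓ R : ℝ) :
    √(ℓ ^ 2 - 4 * R ^ 2) = 2 * √(ℓ ^ 2 / 4 - R ^ 2) := by
  rw [show ℓ ^ 2 - 4 * R ^ 2 = 2 ^ 2 * (ℓ ^ 2 / 4 - R ^ 2) by ring,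
    Real.sqrt_mul (by norm_num), Real.sqrt_sq (by norm_num)]

theorem sh_zero_neg_I_mul (B R ℓ h m m' a : ℝ) :
    sh B R ℓ h m m' 0 (-(I * a))
      = ((B * ℓ ^ 2 / 8 - B * a ^ 2 / 2 - B * R ^ 2 / 2 + B * ℓ * a / 2 : ℝ) : ℂ)
        - h * (m + m') * log (((ℓ / 2 + a) / R : ℝ) : ℂ) := by
  have hlog_arg : (ℓ : ℂ) / 2 + I * -(I * a) = ((ℓ / 2 + a : ℝ) : ℂ) := by
    push_cast
    linear_combination (-(a : ℂ)) * I_sq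
  rw [sh, add_zero, sub_zero, hlog_arg, ← ofReal_div]
  push_cast
  linear_combination (B / 2 * (a : ℂ) ^ 2 - B * ℓ * a / 2) * I_sq

theorem sh_critical_value_general (B R ℓ h m m' : ℝ) (hR : 0 < R) (hℓ : 2 * R < ℓ) :
    sh B R ℓ h m m' 0 (-(Complex.I * (Real.sqrt (ℓ ^ 2 / 4 - R ^ 2) : ℂ)))
      = ((B * ℓ / 4 * Real.sqrt (ℓ ^ 2 - 4 * R ^ 2)
          - h * (m + m') * Real.log ((ℓ + Real.sqrt (ℓ ^ 2 - 4 * R ^ 2)) / (2 * R)) : ℝ) : ℂ) := by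
  set a := √(ℓ ^ 2 / 4 - R ^ 2)
  have ha_sq : a ^ 2 = ℓ ^ 2 / 4 - R ^ 2 := Real.sq_sqrt (by nlinarith)
  have hK : (ℓ + 2 * a) / (2 * R) = (ℓ / 2 + a) / R := by
    field_simp
  have hK_pos : 0 < (ℓ / 2 + a) / R := by
    have : 0 ≤ a := Real.sqrt_nonneg _
    have : 0 < ℓ := by linarith
    positivity
  have hquad :
      B * ℓ ^ 2 / 8 - B * a ^ 2 / 2 - B * R ^ 2 / 2 + B * ℓ * a / 2 = B * ℓ / 4 * (2 * a) := by
    linear_combination (-B / 2) * ha_sq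
  rw [sh_zero_neg_I_mul, hquad, Real.sqrt_sq_sub_four_mul_sq, hK, ← ofReal_log hK_pos.le]
  push_cast
  ring

/-- exact identity for the critical value of the `h`-dependent phase:
`s_h(0, x₂*) = (Bℓ/4)√(ℓ² − 4R²) − h(m + m')·ln K_ℓ` with
`K_ℓ = (ℓ + √(ℓ² − 4R²))/(2R)`. -/
theorem sh_critical_value (B R ℓ h m m' : ℝ) (hB : 0 < B) (hR : 0 < R) (hℓ : 2 * R < ℓ)
    (hh : 0 < h) :
    sh B R ℓ h m m' 0 (-(Complex.I * (Real.sqrt (ℓ ^ 2 / 4 - R ^ 2) : ℂ)))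
      = ((B * ℓ / 4 * Real.sqrt (ℓ ^ 2 - 4 * R ^ 2)
          - h * (m + m') * Real.log ((ℓ + Real.sqrt (ℓ ^ 2 - 4 * R ^ 2)) / (2 * R)) : ℝ) : ℂ) :=
  sh_critical_value_general B R ℓ h m m' hR hℓ
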